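/- arXiv:1906.10904 — 4 statements merged into one kernel-verified Lean document; each statement's English description precedes it below -/
import Mathlib

section
/- Let P₁, P₂ be projections in a finite dimensional von Neumann algebra A with P₁ + P₂ = 1, and similarly Q₁ + Q₂ = 1. If R_{hk} (h,k ∈ {1,2}) are positive elements of A satisfying R_{hk} ≤ P_h and R_{hk} ≤ Q_k for all h,k, and R_{11}+R_{12} = P₁ and R_{11}+R_{21} = Q₁, then R_{hk}R_{h'k'} = 0 whenever (h,k) ≠ (h',k'), and consequently P₁ and Q₁ commute. -/
/-!
If `0 ≤ a ≤ p` and `0 ≤ b ≤ 1 - p` for a projection `p` of a C⋆-algebra, then `a = a p` and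
`b = (1 - p) b`, so `a b = a p (1 - p) b = 0`. Two distinct `R h k`, `R h' k'` are separated in
this way by `P h` when `h ≠ h'` and by `Q k` when `k ≠ k'`. Expanding `P 0 = R 0 0 + R 0 1` and
`Q 0 = R 0 0 + R 1 0`, both `P 0 * Q 0` and `Q 0 * P 0` then reduce to `R 0 0 ^ 2`.
-/

open scoped ComplexOrder

open Finset in
theorem le_one_sub_of_sum_eq_one {A ι : Type*} [AddCommGroup A] [PartialOrder A]
    [IsOrderedAddMonoid A] [One A] [Fintype ι] {p : ι → A} (hp : ∀ i, 0 ≤ p i)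
    (hsum : ∑ i, p i = 1) {i j : ι} (hij : i ≠ j) : p j ≤ 1 - p i := by
  classical
  rw [← hsum, ← add_sum_erase _ _ (mem_univ i), add_sub_cancel_left]
  exact single_le_sum (fun k _ => hp k) (mem_erase.2 ⟨hij.symm, mem_univ j⟩)

theorem commute_add_add_of_mul_eq_zero {R : Type*} [NonUnitalNonAssocSemiring R] {x y z : R}
    (hxy : x * y = 0) (hyx : y * x = 0) (hxz : x * z = 0) (hzx : z * x = 0)
    (hyz : y * z = 0) (hzy : z * y = 0) : Commute (x + y) (x + z) := by
  simp only [Commute, SemiconjBy, add_mul, mul_add, hxy, hyx, hxz, hzx, hyz, hzy]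

section CStarAlgebra

variable {A : Type*} [CStarAlgebra A] [PartialOrder A] [StarOrderedRing A]

theorem IsStarProjection.mul_eq_zero_of_le_of_le_one_sub {p a b : A} (hp : IsStarProjection p)
    (ha : 0 ≤ a) (hap : a ≤ p) (hb : 0 ≤ b) (hbp : b ≤ 1 - p) : a * b = 0 :=
  calc a * b = a * p * ((1 - p) * b) := by
        rw [(hp.mul_right_and_mul_left_of_nonneg_of_le ha hap).1,
          (hp.one_sub.mul_right_and_mul_left_of_nonneg_of_le hb hbp).2]
    _ = a * (p * (1 - p)) * b := by simp only [mul_assoc]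
    _ = 0 := by rw [hp.mul_one_sub_self, mul_zero, zero_mul]

theorem mul_eq_zero_of_le_of_le_of_sum_eq_one {ι : Type*} [Fintype ι]
    {p : ι → A} (hp : ∀ i, IsStarProjection (p i)) (hsum : ∑ i, p i = 1) {i j : ι} (hij : i ≠ j)
    {a b : A} (ha : 0 ≤ a) (hai : a ≤ p i) (hb : 0 ≤ b) (hbj : b ≤ p j) : a * b = 0 :=
  (hp i).mul_eq_zero_of_le_of_le_one_sub ha hai hb
    (hbj.trans (le_one_sub_of_sum_eq_one (fun k => (hp k).nonneg) hsum hij))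

theorem mul_eq_zero_of_le_of_le_of_ne {ι κ : Type*} [Fintype ι] [Fintype κ]
    {p : ι → A} {q : κ → A} (hp : ∀ i, IsStarProjection (p i))
    (hq : ∀ k, IsStarProjection (q k)) (hpsum : ∑ i, p i = 1) (hqsum : ∑ k, q k = 1)
    {r : ι → κ → A} (hr : ∀ i k, 0 ≤ r i k) (hrp : ∀ i k, r i k ≤ p i)
    (hrq : ∀ i k, r i k ≤ q k) {i i' : ι} {k k' : κ} (hne : (i, k) ≠ (i', k')) :
    r i k * r i' k' = 0 := by
  obtain hi | hk := not_and_or.1 (hne ∘ Prod.ext_iff.2)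
  · exact mul_eq_zero_of_le_of_le_of_sum_eq_one hp hpsum hi (hr i k) (hrp i k) (hr i' k')
      (hrp i' k')
  · exact mul_eq_zero_of_le_of_le_of_sum_eq_one hq hqsum hk (hr i k) (hrq i k) (hr i' k')
      (hrq i' k')

end CStarAlgebra

namespace Matrix

variable {n α : Type*} [Fintype n] [NonUnitalNonAssocSemiring α] [Star α]

theorem isStarProjection_iff {P : Matrix n n α} : IsStarProjection P ↔ P.IsHermitian ∧ P * P = P :=
  ⟨fun h => ⟨h.isSelfAdjoint, h.isIdempotentElem⟩, fun h => ⟨h.2, h.1⟩⟩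

end Matrix

/-- Let `P 0 + P 1 = 1` and `Q 0 + Q 1 = 1` be decompositions of the identity
into projections in a (block) matrix algebra, and let `R h k` be positive elements with
`R h k ≤ P h`, `R h k ≤ Q k`, `R 0 0 + R 0 1 = P 0` and `R 0 0 + R 1 0 = Q 0`.
Then `R h k * R h' k' = 0` whenever `(h,k) ≠ (h',k')`, and consequently `P 0` and `Q 0`
commute.  (The order relation `R ≤ S` is expressed by `(S - R).PosSemidef`.) -/
theorem orthogonality_and_commutation_of_projections
    {n : ℕ} (P Q : Fin 2 → Matrix (Fin n) (Fin n) ℂ)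
    (hPproj : ∀ h, (P h).IsHermitian ∧ P h * P h = P h)
    (hQproj : ∀ k, (Q k).IsHermitian ∧ Q k * Q k = Q k)
    (hPsum : P 0 + P 1 = 1) (hQsum : Q 0 + Q 1 = 1)
    (R : Fin 2 → Fin 2 → Matrix (Fin n) (Fin n) ℂ)
    (hRpos : ∀ h k, (R h k).PosSemidef)
    (hRleP : ∀ h k, (P h - R h k).PosSemidef)
    (hRleQ : ∀ h k, (Q k - R h k).PosSemidef)
    (hP0 : R 0 0 + R 0 1 = P 0)
    (hQ0 : R 0 0 + R 1 0 = Q 0) :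
    (∀ h k h' k', (h, k) ≠ (h', k') → R h k * R h' k' = 0) ∧
    P 0 * Q 0 = Q 0 * P 0 := by
  open scoped MatrixOrder Matrix.Norms.L2Operator in
  have orth : ∀ h k h' k', (h, k) ≠ (h', k') → R h k * R h' k' = 0 := fun h k h' k' hne =>
    mul_eq_zero_of_le_of_le_of_ne (fun h => Matrix.isStarProjection_iff.2 (hPproj h))
      (fun k => Matrix.isStarProjection_iff.2 (hQproj k)) (by rwa [Fin.sum_univ_two])
      (by rwa [Fin.sum_univ_two]) (fun h k => Matrix.nonneg_iff_posSemidef.2 (hRpos h k))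
      (fun h k => Matrix.le_iff.2 (hRleP h k)) (fun h k => Matrix.le_iff.2 (hRleQ h k)) hne
  refine ⟨orth, ?_⟩
  rw [← hP0, ← hQ0]
  exact commute_add_add_of_mul_eq_zero (orth _ _ _ _ (by decide)) (orth _ _ _ _ (by decide))
    (orth _ _ _ _ (by decide)) (orth _ _ _ _ (by decide)) (orth _ _ _ _ (by decide))
    (orth _ _ _ _ (by decide))
end

section
/- Let ω = (1/√d) Σᵢ eᵢ⊗eᵢ be the maximally entangled vector in ℂ^d⊗ℂ^d, F the flip on the first two factors of ℂ^d⊗ℂ^d⊗ℂ^d, and E = (F⊗I)(I⊗|ω⟩⟨ω|)(F⊗I) + I⊗|ω⟩⟨ω|. Then E is a positive selfadjoint operator whose nonzero eigenvalues are exactly (d+1)/d and (d−1)/d, with eigenspaces { Σᵢ (v⊗eᵢ ± eᵢ⊗v)⊗eᵢ : v ∈ ℂ^d } respectively; in particular the maximal eigenvalue of E is (d+1)/d. -/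
/-!
In coordinates, `E w = d⁻¹ Σᵢ (b⊗eᵢ + eᵢ⊗a)⊗eᵢ`, where `a j = Σₘ w(m,j,m)` and
`b i = Σₘ w(i,m,m)` contract the third factor of `w` with the first and with the second.
Hence `⟨w, E w'⟩ = d⁻¹ (⟨b, b'⟩ + ⟨a, a'⟩)`, which gives self-adjointness and positivity.
Contracting `E w = μ w` yields `b = t a` and `a = t b` with `t = d (μ - 1)`; for `μ ≠ 0` the
vector `w = μ⁻¹ E w` is determined by `(a, b)`, so `w ≠ 0` forces `t² = 1`, i.e.
`μ = (d ± 1)/d`, and then `w` is of the form `Σᵢ (v⊗eᵢ ± eᵢ⊗v)⊗eᵢ`.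
-/

/-- The maximally entangled vector `ω = (1/√d) Σᵢ eᵢ⊗eᵢ` of `ℂ^d ⊗ ℂ^d`. -/
noncomputable def omegaVec (d : ℕ) : Fin d × Fin d → ℂ :=
  fun p => if p.1 = p.2 then (1 / Real.sqrt d : ℝ) else 0

/-- The operator `I ⊗ |ω⟩⟨ω|` on `ℂ^d ⊗ ℂ^d ⊗ ℂ^d` (rank-one projection on the last two
factors). -/
noncomputable def IomOm (d : ℕ) (w : Fin d × Fin d × Fin d → ℂ) :
    Fin d × Fin d × Fin d → ℂ :=
  fun q => (∑ p : Fin d × Fin d, (starRingEnd ℂ) (omegaVec d p) * w (q.1, p.1, p.2)) *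
    omegaVec d (q.2.1, q.2.2)

/-- The operator `F ⊗ I` on `ℂ^d ⊗ ℂ^d ⊗ ℂ^d` (swap of the first two factors). -/
def swap12 (d : ℕ) (w : Fin d × Fin d × Fin d → ℂ) : Fin d × Fin d × Fin d → ℂ :=
  fun q => w (q.2.1, q.1, q.2.2)

/-- `E = (F⊗I)(I⊗|ω⟩⟨ω|)(F⊗I) + I⊗|ω⟩⟨ω|`. -/
noncomputable def Eop (d : ℕ) (w : Fin d × Fin d × Fin d → ℂ) : Fin d × Fin d × Fin d → ℂ :=
  swap12 d (IomOm d (swap12 d w)) + IomOm d w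

/-- The vector `Σᵢ (v⊗eᵢ + ε eᵢ⊗v)⊗eᵢ` (`ε = ±1`), written in coordinates. -/
def eigVec {d : ℕ} (ε : ℂ) (v : Fin d → ℂ) : Fin d × Fin d × Fin d → ℂ :=
  fun q => v q.1 * (if q.2.1 = q.2.2 then 1 else 0) +
    ε * (v q.2.1 * (if q.1 = q.2.2 then 1 else 0))

/-- The inner product of `ℂ^d ⊗ ℂ^d ⊗ ℂ^d`. -/
noncomputable def inn3 {d : ℕ} (w w' : Fin d × Fin d × Fin d → ℂ) : ℂ :=
  ∑ q : Fin d × Fin d × Fin d, (starRingEnd ℂ) (w q) * w' q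

open Matrix
open scoped ComplexOrder

section

variable {d : ℕ}

def contract13 (w : Fin d × Fin d × Fin d → ℂ) (j : Fin d) : ℂ := ∑ m, w (m, j, m)

def contract23 (w : Fin d × Fin d × Fin d → ℂ) (i : Fin d) : ℂ := ∑ m, w (i, m, m)

/-- The vector `Σᵢ (u⊗eᵢ + eᵢ⊗v)⊗eᵢ`. -/
def pairVec (u v : Fin d → ℂ) : Fin d × Fin d × Fin d → ℂ :=
  fun q => u q.1 * (if q.2.1 = q.2.2 then 1 else 0) + v q.2.1 * (if q.1 = q.2.2 then 1 else 0)

theorem inn3_eq_star_dotProduct (w w' : Fin d × Fin d × Fin d → ℂ) :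
    inn3 w w' = star w ⬝ᵥ w' := rfl

theorem eigVec_eq_pairVec (ε : ℂ) (v : Fin d → ℂ) : eigVec ε v = pairVec v (ε • v) := by
  funext q
  simp only [eigVec, pairVec, Pi.smul_apply, smul_eq_mul]
  ring

theorem contract13_pairVec (u v : Fin d → ℂ) : contract13 (pairVec u v) = u + (d : ℂ) • v := by
  funext j
  simp [contract13, pairVec, Finset.sum_add_distrib]

theorem contract23_pairVec (u v : Fin d → ℂ) : contract23 (pairVec u v) = (d : ℂ) • u + v := by
  funext i
  simp [contract23, pairVec, Finset.sum_add_distrib]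

theorem inn3_pairVec (w : Fin d × Fin d × Fin d → ℂ) (u v : Fin d → ℂ) :
    inn3 w (pairVec u v) = star (contract23 w) ⬝ᵥ u + star (contract13 w) ⬝ᵥ v := by
  simp only [inn3, pairVec, contract13, contract23, dotProduct, Pi.star_apply, star_sum,
    mul_add, Finset.sum_add_distrib, Fintype.sum_prod_type, Finset.sum_mul]
  congr 1
  · simp
  · rw [Finset.sum_comm]
    simp

theorem IomOm_apply (w : Fin d × Fin d × Fin d → ℂ) (q : Fin d × Fin d × Fin d) :
    IomOm d w q = (d : ℂ)⁻¹ * ((if q.2.1 = q.2.2 then 1 else 0) * contract23 w q.1) := by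
  have hsqrt : ((√d : ℝ) : ℂ)⁻¹ * ((√d : ℝ) : ℂ)⁻¹ = (d : ℂ)⁻¹ := by
    rw [← mul_inv, ← Complex.ofReal_mul, Real.mul_self_sqrt d.cast_nonneg, Complex.ofReal_natCast]
  rcases eq_or_ne q.2.1 q.2.2 with h | h
  · simp only [IomOm, omegaVec, contract23, h, Fintype.sum_prod_type, apply_ite (starRingEnd ℂ),
      Complex.conj_ofReal, map_zero, ite_mul, zero_mul, Finset.sum_ite_eq, Finset.mem_univ,
      if_true, one_mul, Finset.sum_mul, Finset.mul_sum]
    refine Finset.sum_congr rfl fun m _ => ?_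
    push_cast
    linear_combination w (q.1, m, m) * hsqrt
  · simp [IomOm, omegaVec, h]

theorem contract23_swap12 (w : Fin d × Fin d × Fin d → ℂ) :
    contract23 (swap12 d w) = contract13 w := rfl

theorem Eop_eq_smul_pairVec (w : Fin d × Fin d × Fin d → ℂ) :
    Eop d w = (d : ℂ)⁻¹ • pairVec (contract23 w) (contract13 w) := by
  funext q
  simp only [Eop, swap12, Pi.add_apply, IomOm_apply, Pi.smul_apply, smul_eq_mul, pairVec,
    contract23_swap12]
  ring

theorem contract13_smul (c : ℂ) (w : Fin d × Fin d × Fin d → ℂ) :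
    contract13 (c • w) = c • contract13 w := by
  funext j
  simp [contract13, Finset.mul_sum]

theorem contract23_smul (c : ℂ) (w : Fin d × Fin d × Fin d → ℂ) :
    contract23 (c • w) = c • contract23 w := by
  funext i
  simp [contract23, Finset.mul_sum]

theorem pairVec_zero : pairVec (0 : Fin d → ℂ) 0 = 0 := by
  funext q
  simp [pairVec]

theorem Eop_pairVec (u v : Fin d → ℂ) :
    Eop d (pairVec u v) = (d : ℂ)⁻¹ • pairVec ((d : ℂ) • u + v) (u + (d : ℂ) • v) := by
  rw [Eop_eq_smul_pairVec, contract13_pairVec, contract23_pairVec]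

theorem inn3_Eop (w w' : Fin d × Fin d × Fin d → ℂ) :
    inn3 w (Eop d w') = (d : ℂ)⁻¹ *
      (star (contract23 w) ⬝ᵥ contract23 w' + star (contract13 w) ⬝ᵥ contract13 w') := by
  rw [Eop_eq_smul_pairVec, inn3_eq_star_dotProduct, dotProduct_smul, ← inn3_eq_star_dotProduct,
    inn3_pairVec, smul_eq_mul]

theorem inn3_Eop_comm (w w' : Fin d × Fin d × Fin d → ℂ) :
    inn3 (Eop d w) w' = inn3 w (Eop d w') := by
  rw [inn3_eq_star_dotProduct, star_dotProduct, ← inn3_eq_star_dotProduct, inn3_Eop, inn3_Eop]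
  simp only [star_mul', star_add, star_inv₀, star_natCast, ← star_dotProduct]

theorem inn3_Eop_self_nonneg (w : Fin d × Fin d × Fin d → ℂ) : 0 ≤ inn3 w (Eop d w) := by
  rw [inn3_Eop]
  exact mul_nonneg (by positivity)
    (add_nonneg (dotProduct_star_self_nonneg _) (dotProduct_star_self_nonneg _))

theorem contract_eq_smul_of_Eop_eq_smul {μ : ℂ} {w : Fin d × Fin d × Fin d → ℂ}
    (hd : (d : ℂ) ≠ 0) (h : Eop d w = μ • w) :
    contract23 w = (d * (μ - 1)) • contract13 w ∧ contract13 w = (d * (μ - 1)) • contract23 w := by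
  have h13 := congrArg contract13 h
  have h23 := congrArg contract23 h
  rw [Eop_eq_smul_pairVec, contract13_smul, contract13_smul, contract13_pairVec] at h13
  rw [Eop_eq_smul_pairVec, contract23_smul, contract23_smul, contract23_pairVec] at h23
  constructor <;> funext i
  · have := congrFun h13 i
    simp only [Pi.smul_apply, Pi.add_apply, smul_eq_mul] at this ⊢
    field_simp at this
    linear_combination this
  · have := congrFun h23 i
    simp only [Pi.smul_apply, Pi.add_apply, smul_eq_mul] at this ⊢
    field_simp at this
    linear_combination this

theorem eq_smul_pairVec_of_Eop_eq_smul {μ : ℂ} {w : Fin d × Fin d × Fin d → ℂ}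
    (hμ : μ ≠ 0) (h : Eop d w = μ • w) :
    w = (μ * d)⁻¹ • pairVec (contract23 w) (contract13 w) := by
  calc w = μ⁻¹ • μ • w := (inv_smul_smul₀ hμ w).symm
    _ = _ := by rw [← h, Eop_eq_smul_pairVec, smul_smul, mul_inv]

theorem Eop_eigenvalue_cases {μ : ℂ} {w : Fin d × Fin d × Fin d → ℂ} (hd : (d : ℂ) ≠ 0)
    (hw : w ≠ 0) (h : Eop d w = μ • w) :
    μ = 0 ∨ μ = ((d : ℂ) + 1) / d ∨ μ = ((d : ℂ) - 1) / d := by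
  refine or_iff_not_imp_left.mpr fun hμ => ?_
  obtain ⟨hb, ha⟩ := contract_eq_smul_of_Eop_eq_smul hd h
  set t := (d : ℂ) * (μ - 1)
  have ht : t * t = 1 := by
    by_contra ht
    have ha0 : contract13 w = 0 := by
      have : (t * t - 1) • contract13 w = 0 := by
        rw [sub_smul, one_smul, ← smul_smul, ← hb, ← ha, sub_self]
      exact (smul_eq_zero.mp this).resolve_left (sub_ne_zero.mpr ht)
    have hb0 : contract23 w = 0 := by rw [hb, ha0, smul_zero]
    exact hw (by rw [eq_smul_pairVec_of_Eop_eq_smul hμ h, ha0, hb0, pairVec_zero, smul_zero])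
  rcases mul_self_eq_one_iff.mp ht with ht | ht
  · left
    rw [eq_div_iff hd]
    linear_combination ht
  · right
    rw [eq_div_iff hd]
    linear_combination ht

theorem Eop_eigVec {ε : ℂ} (hε : ε * ε = 1) (v : Fin d → ℂ) :
    Eop d (eigVec ε v) = (((d : ℂ) + ε) / d) • eigVec ε v := by
  rw [eigVec_eq_pairVec, Eop_pairVec]
  funext q
  simp only [pairVec, Pi.smul_apply, Pi.add_apply, smul_eq_mul]
  linear_combination -(↑d)⁻¹ * v q.2.1 * (if q.1 = q.2.2 then 1 else 0) * hε

theorem Eop_eigenspace_eq {ε : ℂ} (hε : ε * ε = 1) (hd : (d : ℂ) ≠ 0) (hdε : (d : ℂ) + ε ≠ 0) :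
    {w | Eop d w = (((d : ℂ) + ε) / d) • w} = {w | ∃ v : Fin d → ℂ, w = eigVec ε v} := by
  ext w
  refine ⟨fun h => ?_, fun ⟨v, hv⟩ => hv ▸ Eop_eigVec hε v⟩
  have hμ : ((d : ℂ) + ε) / d ≠ 0 := div_ne_zero hdε hd
  have hb : contract23 w = ε • contract13 w := by
    rw [(contract_eq_smul_of_Eop_eq_smul hd h).1]
    congr 1
    field_simp
    ring
  refine ⟨(ε / (d + ε)) • contract13 w, ?_⟩
  refine (eq_smul_pairVec_of_Eop_eq_smul hμ h).trans ?_
  rw [hb, eigVec_eq_pairVec]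
  funext q
  simp only [pairVec, Pi.smul_apply, smul_eq_mul]
  field_simp
  linear_combination -(contract13 w q.2.1 * (if q.1 = q.2.2 then 1 else 0)) * hε

end

/-- `E = (F⊗I)(I⊗|ω⟩⟨ω|)(F⊗I) + I⊗|ω⟩⟨ω|` is a positive selfadjoint operator
whose nonzero eigenvalues are exactly `(d+1)/d` and `(d−1)/d`, with eigenspaces
`{Σᵢ (v⊗eᵢ ± eᵢ⊗v)⊗eᵢ : v ∈ ℂ^d}`; in particular its maximal eigenvalue is `(d+1)/d`. -/
theorem Eop_selfadjoint_positive_eigenvalues (d : ℕ) (hd : 2 ≤ d) :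
    (∀ w w' : Fin d × Fin d × Fin d → ℂ, inn3 (Eop d w) w' = inn3 w (Eop d w')) ∧
    (∀ w : Fin d × Fin d × Fin d → ℂ,
      0 ≤ (inn3 w (Eop d w)).re ∧ (inn3 w (Eop d w)).im = 0) ∧
    ({w | Eop d w = (((d : ℂ) + 1) / d) • w} = {w | ∃ v : Fin d → ℂ, w = eigVec 1 v}) ∧
    ({w | Eop d w = (((d : ℂ) - 1) / d) • w} = {w | ∃ v : Fin d → ℂ, w = eigVec (-1) v}) ∧
    (∀ μ : ℂ, (∃ w : Fin d × Fin d × Fin d → ℂ, w ≠ 0 ∧ Eop d w = μ • w) →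
      μ = 0 ∨ μ = ((d : ℂ) + 1) / d ∨ μ = ((d : ℂ) - 1) / d) ∧
    (∀ μ : ℂ, (∃ w : Fin d × Fin d × Fin d → ℂ, w ≠ 0 ∧ Eop d w = μ • w) →
      μ.re ≤ ((d : ℝ) + 1) / d) := by
  have hd0 : (d : ℂ) ≠ 0 := by exact_mod_cast (by omega : d ≠ 0)
  have hdm1 : (d : ℂ) + -1 ≠ 0 := by
    rw [← sub_eq_add_neg, sub_ne_zero]
    exact_mod_cast (by omega : d ≠ 1)
  have hdp1 : (d : ℂ) + 1 ≠ 0 := by exact_mod_cast d.succ_ne_zero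
  have eigenvalues : ∀ μ : ℂ, (∃ w : Fin d × Fin d × Fin d → ℂ, w ≠ 0 ∧ Eop d w = μ • w) →
      μ = 0 ∨ μ = ((d : ℂ) + 1) / d ∨ μ = ((d : ℂ) - 1) / d :=
    fun μ ⟨w, hw, h⟩ => Eop_eigenvalue_cases hd0 hw h
  refine ⟨inn3_Eop_comm, fun w => ?_, Eop_eigenspace_eq (by norm_num) hd0 hdp1, ?_, eigenvalues,
    fun μ hμ => ?_⟩
  · obtain ⟨hre, him⟩ := Complex.nonneg_iff.mp (inn3_Eop_self_nonneg w)
    exact ⟨hre, him.symm⟩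
  · simpa only [← sub_eq_add_neg] using Eop_eigenspace_eq (by norm_num) hd0 hdm1
  · rcases eigenvalues μ hμ with rfl | rfl | rfl
    · simp only [Complex.zero_re]
      positivity
    · simp
    · simp only [Complex.div_natCast_re, Complex.sub_re, Complex.natCast_re, Complex.one_re]
      gcongr
      linarith
end

section
/- For any vector v ∈ ℂ^d, E(Σᵢ (v⊗eᵢ ± eᵢ⊗v)⊗eᵢ) = ((d±1)/d) · Σᵢ (v⊗eᵢ ± eᵢ⊗v)⊗eᵢ, where E = (F⊗I)(I⊗|ω⟩⟨ω|)(F⊗I) + I⊗|ω⟩⟨ω| and ω = (1/√d)Σᵢ eᵢ⊗eᵢ. -/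
lemma key (d : ℕ) (hd : 0 < d) (ε : ℂ) (hε : ε * ε = 1) (v : Fin d → ℂ) :
    Eop d (eigVec ε v) = (((d:ℂ)+ε)/d) • eigVec ε v := by
  have hd' : (d:ℂ) ≠ 0 := Nat.cast_ne_zero.mpr hd.ne'
  have hsq : ((1 / Real.sqrt d : ℝ) : ℂ) * ((1 / Real.sqrt d : ℝ) : ℂ) = 1 / d := by
    rw [← Complex.ofReal_mul, div_mul_div_comm, one_mul,
      Real.mul_self_sqrt (Nat.cast_nonneg d)]
    push_cast
    ring
  funext q
  obtain ⟨a, b, c⟩ := q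
  simp only [Eop, Pi.add_apply, swap12, IomOm, eigVec, omegaVec, Pi.smul_apply, smul_eq_mul,
    Fintype.sum_prod_type, apply_ite (starRingEnd ℂ), Complex.conj_ofReal, map_zero,
    ite_mul, mul_ite, zero_mul, mul_zero, mul_one, Finset.sum_ite_eq, Finset.mem_univ, if_true]
  simp only [mul_add, Finset.sum_add_distrib, mul_ite, mul_zero, Finset.sum_ite_eq,
    Finset.mem_univ, if_true, Finset.sum_const, Finset.card_univ, Fintype.card_fin,
    nsmul_eq_mul]
  split_ifs with h1 h2 h3
  · linear_combination (v b + (d:ℂ)*ε*v b + (d:ℂ)*v a + ε*v a) * hsq - (v b/(d:ℂ)) * hε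
  · linear_combination (v b + (d:ℂ)*ε*v b) * hsq - (v b/(d:ℂ)) * hε
  · linear_combination ((d:ℂ)*v a + ε*v a) * hsq
  · ring

/-- For every `v ∈ ℂ^d`,
`E(Σᵢ (v⊗eᵢ ± eᵢ⊗v)⊗eᵢ) = ((d±1)/d) · Σᵢ (v⊗eᵢ ± eᵢ⊗v)⊗eᵢ`, where
`E = (F⊗I)(I⊗|ω⟩⟨ω|)(F⊗I) + I⊗|ω⟩⟨ω|` and `ω = (1/√d) Σᵢ eᵢ⊗eᵢ`. -/
theorem Eop_eigenvector_computation (d : ℕ) (hd : 0 < d) (v : Fin d → ℂ) :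
    Eop d (eigVec 1 v) = (((d : ℂ) + 1) / d) • eigVec 1 v ∧
    Eop d (eigVec (-1) v) = (((d : ℂ) - 1) / d) • eigVec (-1) v := by
  refine ⟨key d hd 1 (by ring) v, ?_⟩
  rw [sub_eq_add_neg]
  exact key d hd (-1) (by ring) v
end

section
/- If Θ and Λ are compatible quantum channels on L¹(ℂ^d) (margins of a single channel Φ : L¹(ℂ^d) → L¹(ℂ^d⊗ℂ^d)), then Tr[Θ] + Tr[Λ] ≤ d(d+1), where Tr denotes the trace of a channel viewed as a linear map on the d²-dimensional operator space. -/
/-- Positive element of a star ring: a finite sum of elements of the form `star y * y`. -/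
def IsPosElem {A : Type*} [Ring A] [Star A] (x : A) : Prop :=
  ∃ (n : ℕ) (y : Fin n → A), x = ∑ i, star (y i) * y i

/-- Complete positivity of a linear map between star algebras. -/
def IsCP {A B : Type*} [Ring A] [Star A] [Algebra ℂ A]
    [Ring B] [Star B] [Algebra ℂ B] (φ : B →ₗ[ℂ] A) : Prop :=
  ∀ (n : ℕ) (b : Fin n → B) (a : Fin n → A),
    IsPosElem (∑ i, ∑ j, star (a i) * φ (star (b i) * b j) * a j)

/-- A quantum channel in the Schrödinger picture: a completely positive trace preserving
linear map on matrices. -/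
def IsQChannel {d : ℕ} {m : Type*} [Fintype m] [DecidableEq m]
    (φ : Matrix (Fin d) (Fin d) ℂ →ₗ[ℂ] Matrix m m ℂ) : Prop :=
  IsCP φ ∧ ∀ a : Matrix (Fin d) (Fin d) ℂ, (φ a).trace = a.trace

/-- Partial trace over the second factor. -/
noncomputable def ptr2 {d : ℕ} (M : Matrix (Fin d × Fin d) (Fin d × Fin d) ℂ) :
    Matrix (Fin d) (Fin d) ℂ :=
  Matrix.of fun i k => ∑ j, M (i, j) (k, j)

/-- Partial trace over the first factor. -/
noncomputable def ptr1 {d : ℕ} (M : Matrix (Fin d × Fin d) (Fin d × Fin d) ℂ) :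
    Matrix (Fin d) (Fin d) ℂ :=
  Matrix.of fun j l => ∑ i, M (i, j) (i, l)

/-- Compatibility of two quantum channels on `L¹(ℂ^d)`: they are the two margins (partial
traces) of a single channel into `L¹(ℂ^d ⊗ ℂ^d)`. -/
def QCompatible {d : ℕ}
    (Θ Λ : Matrix (Fin d) (Fin d) ℂ →ₗ[ℂ] Matrix (Fin d) (Fin d) ℂ) : Prop :=
  ∃ Φ : Matrix (Fin d) (Fin d) ℂ →ₗ[ℂ] Matrix (Fin d × Fin d) (Fin d × Fin d) ℂ,
    IsQChannel Φ ∧ (∀ a, Θ a = ptr2 (Φ a)) ∧ (∀ a, Λ a = ptr1 (Φ a))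

/-! Let `J` be the Choi matrix of the joint channel `Φ`: complete positivity makes it positive
semidefinite and trace preservation gives `Tr J = d`. Let `X`, `Y` have `k`-th columns
`xₖ = ∑ i, |i⟩ ⊗ |i⟩ ⊗ |k⟩` and `yₖ = ∑ i, |i⟩ ⊗ |k⟩ ⊗ |i⟩` (input ⊗ output₁ ⊗ output₂); then
`Tr Θ = Tr (J X Xᴴ)` and `Tr Λ = Tr (J Y Yᴴ)`. The Gram relations `XᴴX = YᴴY = d • 1` and
`XᴴY = 1` force `X Xᴴ + Y Yᴴ ≤ (d + 1) • 1`, hence `Tr Θ + Tr Λ ≤ (d + 1) Tr J = d (d + 1)`. -/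

open Matrix
open scoped ComplexOrder

theorem Matrix.posSemidef_of_dotProduct_mulVec_nonneg {n : Type*} [Fintype n] [DecidableEq n]
    {M : Matrix n n ℂ} (hM : ∀ x, 0 ≤ star x ⬝ᵥ (M *ᵥ x)) : M.PosSemidef := by
  -- Over `ℂ` a real-valued quadratic form already forces `M` to be Hermitian.
  rw [← Matrix.isPositive_toEuclideanLin_iff, LinearMap.isPositive_iff_complex]
  intro x
  have hx := hM x.ofLp
  have hreal := Complex.eq_re_of_ofReal_le (r := 0) (by simpa using hx)
  have hinner : inner ℂ (M.toEuclideanLin x) x = star (star x.ofLp ⬝ᵥ (M *ᵥ x.ofLp)) := by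
    simp only [EuclideanSpace.inner_eq_star_dotProduct, ofLp_toLpLin, toLin'_apply,
      dotProduct_comm]
    simp [dotProduct, mul_comm]
  rw [hinner, hreal, Complex.star_def, Complex.conj_ofReal]
  exact ⟨rfl, (Complex.nonneg_iff.mp hx).1⟩

theorem Matrix.PosSemidef.trace_mul_nonneg {𝕜 n : Type*} [RCLike 𝕜] [Fintype n]
    {A B : Matrix n n 𝕜} (hA : A.PosSemidef) (hB : B.PosSemidef) : 0 ≤ (A * B).trace := by
  obtain ⟨k, v, rfl⟩ := posSemidef_iff_eq_sum_vecMulVec.mp hB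
  rw [Matrix.mul_sum, trace_sum]
  refine Finset.sum_nonneg fun i _ => ?_
  rw [mul_vecMulVec, trace_vecMulVec, dotProduct_comm]
  exact hA.dotProduct_mulVec_nonneg _

theorem Matrix.posSemidef_smul_one_sub_of_gram {𝕜 m n : Type*} [RCLike 𝕜] [Fintype m]
    [DecidableEq m] [Fintype n] [DecidableEq n] {X Y : Matrix m n 𝕜} {a : ℝ} (ha : 0 ≤ a)
    (hXX : Xᴴ * X = (a : 𝕜) • 1) (hYY : Yᴴ * Y = (a : 𝕜) • 1) (hXY : Xᴴ * Y = 1) :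
    (((a + 1 : ℝ) : 𝕜) • 1 - (X * Xᴴ + Y * Yᴴ)).PosSemidef := by
  set c : 𝕜 := ((a + 1 : ℝ) : 𝕜)
  set Q := X * Xᴴ + Y * Yᴴ
  set R := c • 1 - Q
  have hYX : Yᴴ * X = 1 := by simpa using congrArg conjTranspose hXY
  have hR : Rᴴ = R := by
    simp [R, Q, c, conjTranspose_sub, conjTranspose_add, conjTranspose_mul]
  have hQQ : Q * Q = (a : 𝕜) • Q + (X * Yᴴ + Y * Xᴴ) := by
    simp only [Q, add_mul, mul_add, Matrix.mul_assoc]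
    simp only [← Matrix.mul_assoc Xᴴ, ← Matrix.mul_assoc Yᴴ, hXX, hYY, hXY, hYX, Matrix.one_mul,
      smul_mul, Matrix.mul_smul]
    module
  have hW : (X - Y) * (X - Y)ᴴ = Q - (X * Yᴴ + Y * Xᴴ) := by
    simp only [Q, conjTranspose_sub, Matrix.sub_mul, Matrix.mul_sub]
    abel
  -- `Q² = (a + 1) Q - (X - Y)(X - Y)ᴴ`, so `(a + 1) R - R² = (X - Y)(X - Y)ᴴ`.
  have key : c • R = Rᴴ * R + (X - Y) * (X - Y)ᴴ := by
    rw [hR, hW]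
    simp only [R, sub_mul, mul_sub, smul_mul, Matrix.mul_smul, Matrix.one_mul, Matrix.mul_one, hQQ]
    push_cast [c]
    module
  have hc : 0 < c := by simp only [c]; exact_mod_cast (by linarith : (0:ℝ) < a + 1)
  have : R = c⁻¹ • (Rᴴ * R + (X - Y) * (X - Y)ᴴ) := by
    rw [← key, smul_smul, inv_mul_cancel₀ hc.ne', one_smul]
  rw [this]
  exact ((posSemidef_conjTranspose_mul_self R).add
    (posSemidef_self_mul_conjTranspose (X - Y))).smul (inv_nonneg.mpr hc.le)

theorem LinearMap.trace_eq_sum_apply_single {R n : Type*} [CommRing R] [Fintype n]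
    [DecidableEq n] (f : Matrix n n R →ₗ[R] Matrix n n R) :
    LinearMap.trace R _ f = ∑ i, ∑ j, f (Matrix.single i j 1) i j := by
  rw [LinearMap.trace_eq_matrix_trace R (Matrix.stdBasis R n n) f, Matrix.trace,
    ← Finset.sum_product', Finset.univ_product_univ]
  refine Finset.sum_congr rfl fun p _ => ?_
  rw [diag_apply, LinearMap.toMatrix_apply, stdBasis_eq_single]
  simp [Matrix.stdBasis]

theorem IsPosElem.posSemidef {𝕜 m : Type*} [RCLike 𝕜] [Fintype m] [DecidableEq m]
    {M : Matrix m m 𝕜} (hM : IsPosElem M) : M.PosSemidef := by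
  obtain ⟨k, y, rfl⟩ := hM
  exact posSemidef_sum _ fun i _ => posSemidef_conjTranspose_mul_self (y i)

def choiMatrix {R n m : Type*} [CommSemiring R] [DecidableEq n]
    (Φ : Matrix n n R →ₗ[R] Matrix m m R) : Matrix (n × m) (n × m) R :=
  Matrix.of fun x y => Φ (Matrix.single x.1 y.1 1) x.2 y.2

theorem trace_choiMatrix {R n m : Type*} [CommSemiring R] [Fintype n] [DecidableEq n] [Fintype m]
    {Φ : Matrix n n R →ₗ[R] Matrix m m R} (hΦ : ∀ a, (Φ a).trace = a.trace) :
    (choiMatrix Φ).trace = Fintype.card n := by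
  have hdiag (i : n) : ∑ p, Φ (Matrix.single i i 1) p p = 1 := by
    simpa [Matrix.trace] using hΦ (Matrix.single i i 1)
  simp [Matrix.trace, choiMatrix, Fintype.sum_prod_type, hdiag]

theorem IsCP.posSemidef_choiMatrix {d : ℕ} {m : Type*} [Fintype m] [DecidableEq m]
    {Φ : Matrix (Fin d) (Fin d) ℂ →ₗ[ℂ] Matrix m m ℂ} (hΦ : IsCP Φ) :
    (choiMatrix Φ).PosSemidef := by
  refine posSemidef_of_dotProduct_mulVec_nonneg fun v => ?_
  rcases isEmpty_or_nonempty (Fin d × m) with _ | ⟨z, q⟩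
  · simp [dotProduct]
  -- Feeding `bᵢ = E_{z i}` and `aⱼ` with all columns `v (j, ·)` to complete positivity puts the
  -- quadratic form of the Choi matrix on the diagonal of a positive matrix.
  obtain ⟨n, y, hy⟩ := hΦ d (fun i => Matrix.single z i 1) (fun j => Matrix.of fun p _ => v (j, p))
  have hq := (IsPosElem.posSemidef ⟨n, y, hy⟩).diag_nonneg (i := q)
  convert hq using 1
  have hstar (i j : Fin d) : star (Matrix.single z i (1 : ℂ)) * Matrix.single z j 1 =
      Matrix.single i j 1 := by
    simp [star_eq_conjTranspose]
  simp only [hstar, dotProduct, mulVec, choiMatrix, Matrix.sum_apply, Matrix.mul_apply,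
    Fintype.sum_prod_type, Finset.mul_sum, Finset.sum_mul]
  refine Finset.sum_congr rfl fun i _ => ?_
  rw [Finset.sum_comm]
  refine Finset.sum_congr rfl fun j _ => ?_
  rw [Finset.sum_comm]
  simp [mul_assoc]

-- Rows are indexed by `(input, (output₁, output₂))`.
def maxEntFst (d : ℕ) : Matrix (Fin d × (Fin d × Fin d)) (Fin d) ℂ :=
  Matrix.of fun x k => if x.2 = (x.1, k) then 1 else 0

def maxEntSnd (d : ℕ) : Matrix (Fin d × (Fin d × Fin d)) (Fin d) ℂ :=
  Matrix.of fun x k => if x.2 = (k, x.1) then 1 else 0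

theorem conjTranspose_maxEntFst_mul_self (d : ℕ) :
    (maxEntFst d)ᴴ * maxEntFst d = (d : ℂ) • 1 := by
  ext k l
  simp [maxEntFst, Matrix.mul_apply, Fintype.sum_prod_type, Matrix.one_apply, eq_comm]

theorem conjTranspose_maxEntSnd_mul_self (d : ℕ) :
    (maxEntSnd d)ᴴ * maxEntSnd d = (d : ℂ) • 1 := by
  ext k l
  simp [maxEntSnd, Matrix.mul_apply, Fintype.sum_prod_type, Matrix.one_apply, eq_comm]

theorem conjTranspose_maxEntFst_mul_maxEntSnd (d : ℕ) :
    (maxEntFst d)ᴴ * maxEntSnd d = 1 := by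
  ext k l
  simp [maxEntFst, maxEntSnd, Matrix.mul_apply, Fintype.sum_prod_type, Matrix.one_apply,
    ite_and, Finset.sum_ite_eq, Finset.sum_ite_eq', eq_comm]

theorem trace_eq_trace_choiMatrix_mul_maxEntFst {d : ℕ}
    {Θ : Matrix (Fin d) (Fin d) ℂ →ₗ[ℂ] Matrix (Fin d) (Fin d) ℂ}
    {Φ : Matrix (Fin d) (Fin d) ℂ →ₗ[ℂ] Matrix (Fin d × Fin d) (Fin d × Fin d) ℂ}
    (h : ∀ a, Θ a = ptr2 (Φ a)) :
    LinearMap.trace ℂ _ Θ = (choiMatrix Φ * (maxEntFst d * (maxEntFst d)ᴴ)).trace := by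
  rw [LinearMap.trace_eq_sum_apply_single]
  simp only [h, ptr2, of_apply]
  rw [Finset.sum_congr rfl fun _ _ => Finset.sum_comm]
  simp [Matrix.trace, Matrix.mul_apply, choiMatrix, maxEntFst, Fintype.sum_prod_type, ite_and,
    Finset.sum_ite_eq, Finset.sum_ite_eq', mul_ite]

theorem trace_eq_trace_choiMatrix_mul_maxEntSnd {d : ℕ}
    {Λ : Matrix (Fin d) (Fin d) ℂ →ₗ[ℂ] Matrix (Fin d) (Fin d) ℂ}
    {Φ : Matrix (Fin d) (Fin d) ℂ →ₗ[ℂ] Matrix (Fin d × Fin d) (Fin d × Fin d) ℂ}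
    (h : ∀ a, Λ a = ptr1 (Φ a)) :
    LinearMap.trace ℂ _ Λ = (choiMatrix Φ * (maxEntSnd d * (maxEntSnd d)ᴴ)).trace := by
  rw [LinearMap.trace_eq_sum_apply_single]
  simp only [h, ptr1, of_apply]
  rw [Finset.sum_congr rfl fun _ _ => Finset.sum_comm]
  simp [Matrix.trace, Matrix.mul_apply, choiMatrix, maxEntSnd, Fintype.sum_prod_type, ite_and,
    Finset.sum_ite_eq, Finset.sum_ite_eq', mul_ite]

theorem trace_sum_le_of_compatible_general {d : ℕ}
    (Θ Λ : Matrix (Fin d) (Fin d) ℂ →ₗ[ℂ] Matrix (Fin d) (Fin d) ℂ)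
    (hcomp : QCompatible Θ Λ) :
    (LinearMap.trace ℂ _ Θ + LinearMap.trace ℂ _ Λ).re ≤ (d : ℝ) * (d + 1) ∧
    (LinearMap.trace ℂ _ Θ + LinearMap.trace ℂ _ Λ).im = 0 := by
  obtain ⟨Φ, hΦ, hΘΦ, hΛΦ⟩ := hcomp
  have hE := posSemidef_smul_one_sub_of_gram (a := d) d.cast_nonneg
    (by simpa using conjTranspose_maxEntFst_mul_self d)
    (by simpa using conjTranspose_maxEntSnd_mul_self d) (conjTranspose_maxEntFst_mul_maxEntSnd d)
  have hpos := hΦ.1.posSemidef_choiMatrix.trace_mul_nonneg hE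
  rw [Matrix.mul_sub, Matrix.mul_add, trace_sub, trace_add, Matrix.mul_smul, Matrix.mul_one,
    trace_smul, trace_choiMatrix hΦ.2, ← trace_eq_trace_choiMatrix_mul_maxEntFst hΘΦ,
    ← trace_eq_trace_choiMatrix_mul_maxEntSnd hΛΦ, sub_nonneg] at hpos
  obtain ⟨hre, him⟩ := Complex.le_def.mp hpos
  constructor
  · simpa [mul_comm] using hre
  · simpa using him

/-- If `Θ` and `Λ` are compatible quantum channels on `L¹(ℂ^d)`, then
`Tr[Θ] + Tr[Λ] ≤ d(d+1)`, where `Tr` is the trace of a channel viewed as a linear map on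
the `d²`-dimensional operator space (the value is in fact real). -/
theorem trace_sum_le_of_compatible {d : ℕ} (hd : 0 < d)
    (Θ Λ : Matrix (Fin d) (Fin d) ℂ →ₗ[ℂ] Matrix (Fin d) (Fin d) ℂ)
    (hΘ : IsQChannel Θ) (hΛ : IsQChannel Λ)
    (hcomp : QCompatible Θ Λ) :
    (LinearMap.trace ℂ _ Θ + LinearMap.trace ℂ _ Λ).re ≤ (d : ℝ) * (d + 1) ∧
    (LinearMap.trace ℂ _ Θ + LinearMap.trace ℂ _ Λ).im = 0 :=
  trace_sum_le_of_compatible_general Θ Λ hcomp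
end
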